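/- arXiv:0907.3508 — 2 statements merged into one kernel-verified Lean document; each statement's English description precedes it below -/
import Mathlib

section
/- Let 𝕜 be a field, and let H₊ and H₋ be 𝕜-vector spaces with internal direct sum decompositions H₊ = K₊ ⊕ L₊ and H₋ = K₋ ⊕ L₋. Let D : H₊ → H₋ be a linear map with D(K₊) ⊆ K₋ and D(L₊) ⊆ L₋ whose restriction to K₊ is a bijection onto K₋, let p₊ : H₊ → L₊ be the projection onto L₊ with kernel K₊, and for α ∈ 𝕜 define D̃(α) : H₊ × L₋ → H₋ × L₊ by D̃(α)(h, l) = (D(h) + α·l, α·p₊(h)). Then for α ≠ 0 the following explicit formula gives the (unique) preimage of any (h′, l′) ∈ H₋ × L₊ under D̃(α): writing h′ = k′ + m′ with k′ ∈ K₋ and m′ ∈ L₋, the pair (h, l) with h = (D|_{K₊})⁻¹(k′) + α⁻¹·l′ ∈ H₊ and l = α⁻¹·m′ − α⁻²·D(l′) ∈ L₋ satisfies D̃(α)(h, l) = (h′, l′). (Note that D(l′) ∈ L₋ since l′ ∈ L₊ and D(L₊) ⊆ L₋.) -/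
theorem LinearMap.map_add_inv_smul_add_smul_sub_inv_sq_smul {𝕜 V W : Type*} [DivisionRing 𝕜]
    [AddCommGroup V] [Module 𝕜 V] [AddCommGroup W] [Module 𝕜 W]
    (D : V →ₗ[𝕜] W) {α : 𝕜} (hα : α ≠ 0) (k l : V) (m : W) :
    D (k + α⁻¹ • l) + α • (α⁻¹ • m - (α ^ 2)⁻¹ • D l) = D k + m := by
  rw [map_add, map_smul, smul_sub, smul_inv_smul₀ hα, smul_smul, sq, mul_inv_rev,
    mul_inv_cancel_left₀ hα]
  abel

theorem Submodule.smul_projectionOnto_add_inv_smul {𝕜 E : Type*} [DivisionRing 𝕜]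
    [AddCommGroup E] [Module 𝕜 E] {K L : Submodule 𝕜 E} (h : IsCompl L K)
    {α : 𝕜} (hα : α ≠ 0) {k : E} (hk : k ∈ K) (l : L) :
    α • L.projectionOnto K h (k + α⁻¹ • (l : E)) = l := by
  rw [map_add, map_smul, projectionOnto_apply_of_mem_right h hk,
    projectionOnto_apply_left h l, zero_add, smul_inv_smul₀ hα]

theorem stmt1_general (𝕜 : Type*) [Field 𝕜]
    (Hp Hm : Type*) [AddCommGroup Hp] [Module 𝕜 Hp] [AddCommGroup Hm] [Module 𝕜 Hm]
    (Kp Lp : Submodule 𝕜 Hp) (Lm : Submodule 𝕜 Hm)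
    (hplus : IsCompl Kp Lp)
    (D : Hp →ₗ[𝕜] Hm)
    (hDL : Set.MapsTo D (Lp : Set Hp) (Lm : Set Hm))
    (α : 𝕜) (hα : α ≠ 0)
    (h' : Hm) (l' : Lp)
    (k' m' : Hm) (hm' : m' ∈ Lm) (hsum : h' = k' + m')
    (k : Hp) (hk : k ∈ Kp) (hDk : D k = k') :
    (fun x : Hp × Lm =>
      ((D x.1 + α • (x.2 : Hm),
        α • (Lp.linearProjOfIsCompl Kp hplus.symm x.1)) : Hm × Lp))
      (k + α⁻¹ • (l' : Hp),
       α⁻¹ • (⟨m', hm'⟩ : Lm) - (α ^ 2)⁻¹ • (⟨D l', hDL l'.2⟩ : Lm))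
      = (h', l') := by
  refine Prod.ext ?_ ?_
  · rw [hsum, ← hDk, ← D.map_add_inv_smul_add_smul_sub_inv_sq_smul hα k l' m']
    rfl
  · dsimp only
    exact Lp.smul_projectionOnto_add_inv_smul (K := Kp) hplus.symm hα hk l'

/-- explicit inverse formula for the stabilized map `D̃(α)` when `α ≠ 0`.
Given `(h', l') ∈ Hm × Lp`, write `h' = k' + m'` with `k' ∈ Km`, `m' ∈ Lm`, and let
`k ∈ Kp` be the preimage of `k'` under the bijection `D|_{Kp} : Kp → Km`.  Then
`h = k + α⁻¹ • l'` and `l = α⁻¹ • m' - α⁻² • D l'` satisfy `D̃(α) (h, l) = (h', l')`. -/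
theorem stmt1 (𝕜 : Type*) [Field 𝕜]
    (Hp Hm : Type*) [AddCommGroup Hp] [Module 𝕜 Hp] [AddCommGroup Hm] [Module 𝕜 Hm]
    (Kp Lp : Submodule 𝕜 Hp) (Km Lm : Submodule 𝕜 Hm)
    (hplus : IsCompl Kp Lp) (hminus : IsCompl Km Lm)
    (D : Hp →ₗ[𝕜] Hm)
    (hDK : Set.BijOn D (Kp : Set Hp) (Km : Set Hm))
    (hDL : Set.MapsTo D (Lp : Set Hp) (Lm : Set Hm))
    (α : 𝕜) (hα : α ≠ 0)
    (h' : Hm) (l' : Lp)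
    (k' m' : Hm) (hk' : k' ∈ Km) (hm' : m' ∈ Lm) (hsum : h' = k' + m')
    (k : Hp) (hk : k ∈ Kp) (hDk : D k = k') :
    (fun x : Hp × Lm =>
      ((D x.1 + α • (x.2 : Hm),
        α • (Lp.linearProjOfIsCompl Kp hplus.symm x.1)) : Hm × Lp))
      (k + α⁻¹ • (l' : Hp),
       α⁻¹ • (⟨m', hm'⟩ : Lm) - (α ^ 2)⁻¹ • (⟨D l', hDL l'.2⟩ : Lm))
      = (h', l') :=
  stmt1_general 𝕜 Hp Hm Kp Lp Lm hplus D hDL α hα h' l' k' m' hm' hsum k hk hDk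
end

section
/- Let 𝕜 be a field, let H₊ and H₋ be 𝕜-vector spaces with internal direct sum decompositions H₊ = P₊ ⊕ L′₊ and H₋ = P₋ ⊕ L′₋, and let D : H₊ → H₋ be a linear map. Write D in block form with components A : P₊ → P₋, B : L′₊ → P₋, C : P₊ → L′₋ (obtained by composing D with the inclusions of P₊, L′₊ and the projections onto P₋, L′₋ determined by the decompositions), and assume A is bijective. Define the subspaces K₊ = P₊, L₊ = { l − A⁻¹(B(l)) : l ∈ L′₊ }, K₋ = { p + C(A⁻¹(p)) : p ∈ P₋ }, and L₋ = L′₋. Then H₊ = K₊ ⊕ L₊ and H₋ = K₋ ⊕ L₋ are internal direct sum decompositions, D(K₊) ⊆ K₋ and D(L₊) ⊆ L₋, and D restricts to a bijection from K₊ onto K₋. -/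
/-!
On `P₊` the map `D` is `p ↦ A p + C p`, that is `G (A p)` with `G q = q + C (A⁻¹ q)`; as `G` is
injective and `A` bijective, `D` maps `P₊` bijectively onto `K₋ = range G`. For `l ∈ L′₊`, the
`P₋`-component of `D (l - A⁻¹ (B l))` is `B l - A (A⁻¹ (B l)) = 0`, so `D (L₊) ⊆ L′₋`. Both `L₊` and
`K₋` are graphs of maps between complementary summands, and such a graph is again a complement
of the summand it maps into.
-/

open LinearMap Submodule

namespace Submodule

variable {R M : Type*} [Ring R] [AddCommGroup M] [Module R M]

theorem isCompl_range_subtype_add_subtype_comp {P L : Submodule R M} (h : IsCompl P L)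
    (f : L →ₗ[R] P) : IsCompl P (range (L.subtype + P.subtype ∘ₗ f)) := by
  constructor
  · rw [disjoint_iff_inf_le]
    rintro _ ⟨hP, l, rfl⟩
    have hl : (l : M) ∈ P := by
      simpa using P.sub_mem hP (f l).2
    have : l = 0 := Subtype.ext (h.disjoint.le_bot ⟨hl, l.2⟩)
    simp [this]
  · rw [codisjoint_iff, eq_top_iff, ← h.sup_eq_top]
    refine sup_le le_sup_left fun l hl => ?_
    have hgraph : l + (f ⟨l, hl⟩ : M) ∈ range (L.subtype + P.subtype ∘ₗ f) := ⟨⟨l, hl⟩, rfl⟩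
    simpa using (P ⊔ _).sub_mem (mem_sup_right hgraph) (mem_sup_left (f ⟨l, hl⟩).2)

theorem isCompl_range_subtype_sub_subtype_comp {P L : Submodule R M} (h : IsCompl P L)
    (f : L →ₗ[R] P) : IsCompl P (range (L.subtype - P.subtype ∘ₗ f)) := by
  simpa [sub_eq_add_neg, comp_neg] using isCompl_range_subtype_add_subtype_comp h (-f)

theorem injective_subtype_add_subtype_comp {P L : Submodule R M} (h : Disjoint P L)
    (g : P →ₗ[R] L) : Function.Injective (P.subtype + L.subtype ∘ₗ g) := by
  rw [← ker_eq_bot, eq_bot_iff]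
  intro p hp
  have hp' : (p : M) + g p = 0 := hp
  have hpL : (p : M) ∈ L := by
    rw [eq_neg_of_add_eq_zero_left hp']
    exact L.neg_mem (g p).2
  simpa using h.le_bot ⟨p.2, hpL⟩

end Submodule

namespace LinearMap

variable {R M N X : Type*} [Ring R] [AddCommGroup M] [Module R M] [AddCommGroup N] [Module R N]
  [AddCommGroup X] [Module R X]

theorem bijOn_range_of_comp_subtype_eq {D : M →ₗ[R] N} {P : Submodule R M} {g : X →ₗ[R] N}
    (hg : Function.Injective g) (e : P ≃ₗ[R] X) (h : D ∘ₗ P.subtype = g ∘ₗ e) :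
    Set.BijOn D P (range g) := by
  have hD (x : P) : D x = g (e x) := LinearMap.congr_fun h x
  refine ⟨fun x hx => ⟨e ⟨x, hx⟩, (hD ⟨x, hx⟩).symm⟩, fun x hx y hy hxy => ?_, ?_⟩
  · have : e ⟨x, hx⟩ = e ⟨y, hy⟩ := hg (by rw [← hD, ← hD]; exact hxy)
    simpa using e.injective this
  · rintro _ ⟨z, rfl⟩
    exact ⟨e.symm z, (e.symm z).2, by rw [hD, e.apply_symm_apply]⟩

variable {D : M →ₗ[R] N} {Q L' : Submodule R N} {h : IsCompl Q L'} {P : Submodule R M}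
  {e : P ≃ₗ[R] Q}

theorem bijOn_range_subtype_add_subtype_comp
    (he : (e : P →ₗ[R] Q) = Q.projectionOnto L' h ∘ₗ D ∘ₗ P.subtype) :
    Set.BijOn D P
      (range (Q.subtype + L'.subtype ∘ₗ (L'.projectionOnto Q h.symm ∘ₗ D ∘ₗ P.subtype) ∘ₗ
        e.symm.toLinearMap)) := by
  refine bijOn_range_of_comp_subtype_eq (injective_subtype_add_subtype_comp h.disjoint _) e ?_
  ext x
  have hex : (e x : N) = Q.projection L' h (D x) :=
    congr_arg Subtype.val (LinearMap.congr_fun he x)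
  simp [hex, projection_add_projection_eq_self]

theorem mapsTo_range_subtype_sub_subtype_comp
    (he : (e : P →ₗ[R] Q) = Q.projectionOnto L' h ∘ₗ D ∘ₗ P.subtype) (L : Submodule R M) :
    Set.MapsTo D
      (range (L.subtype - P.subtype ∘ₗ e.symm.toLinearMap ∘ₗ
        (Q.projectionOnto L' h ∘ₗ D ∘ₗ L.subtype)))
      L' := by
  rintro _ ⟨l, rfl⟩
  have hAe (q : Q) : Q.projectionOnto L' h (D (e.symm q)) = q := by
    simpa using (LinearMap.congr_fun he (e.symm q)).symm
  rw [SetLike.mem_coe, ← projectionOnto_apply_eq_zero_iff h]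
  simp [hAe]

end LinearMap

theorem stmt2_general (𝕜 : Type*) [Field 𝕜]
    (Hp Hm : Type*) [AddCommGroup Hp] [Module 𝕜 Hp] [AddCommGroup Hm] [Module 𝕜 Hm]
    (Pp Lp' : Submodule 𝕜 Hp) (Pm Lm' : Submodule 𝕜 Hm)
    (hplus : IsCompl Pp Lp') (hminus : IsCompl Pm Lm')
    (D : Hp →ₗ[𝕜] Hm)
    (A : Pp →ₗ[𝕜] Pm) (B : Lp' →ₗ[𝕜] Pm) (C : Pp →ₗ[𝕜] Lm')
    (hA : A = (Pm.linearProjOfIsCompl Lm' hminus) ∘ₗ D ∘ₗ Pp.subtype)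
    (hB : B = (Pm.linearProjOfIsCompl Lm' hminus) ∘ₗ D ∘ₗ Lp'.subtype)
    (hC : C = (Lm'.linearProjOfIsCompl Pm hminus.symm) ∘ₗ D ∘ₗ Pp.subtype)
    (e : Pp ≃ₗ[𝕜] Pm) (he : (e : Pp →ₗ[𝕜] Pm) = A)
    (Kp : Submodule 𝕜 Hp) (hKp : Kp = Pp)
    (Lp : Submodule 𝕜 Hp)
    (hLp : Lp = LinearMap.range (Lp'.subtype - Pp.subtype ∘ₗ e.symm.toLinearMap ∘ₗ B))
    (Km : Submodule 𝕜 Hm)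
    (hKm : Km = LinearMap.range (Pm.subtype + Lm'.subtype ∘ₗ C ∘ₗ e.symm.toLinearMap))
    (Lm : Submodule 𝕜 Hm) (hLm : Lm = Lm') :
    IsCompl Kp Lp ∧ IsCompl Km Lm ∧
    Set.MapsTo D (Kp : Set Hp) (Km : Set Hm) ∧
    Set.MapsTo D (Lp : Set Hp) (Lm : Set Hm) ∧
    Set.BijOn D (Kp : Set Hp) (Km : Set Hm) := by
  subst hKp hLp hKm hLm hA hB hC
  have hbij := bijOn_range_subtype_add_subtype_comp he
  exact ⟨isCompl_range_subtype_sub_subtype_comp hplus _,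
    (isCompl_range_subtype_add_subtype_comp hminus.symm _).symm, hbij.mapsTo,
    mapsTo_range_subtype_sub_subtype_comp he Lp', hbij⟩

/-- the Mischenko–Fomenko block-diagonalization construction.  Given
decompositions `Hp = Pp ⊕ L′₊`, `Hm = Pm ⊕ L′₋`, a linear map `D : Hp → Hm` with block
components `A : Pp → Pm`, `B : L′₊ → Pm`, `C : Pp → L′₋`, and `A` bijective (with linear
inverse realized by the linear equivalence `e`), the subspaces
`Kp = Pp`, `Lp = { l - A⁻¹ (B l) : l ∈ L′₊ }`, `Km = { p + C (A⁻¹ p) : p ∈ Pm }`,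
`Lm = L′₋` give internal direct sum decompositions `Hp = Kp ⊕ Lp`, `Hm = Km ⊕ Lm`,
with respect to which `D` is block diagonal and restricts to a bijection `Kp → Km`. -/
theorem stmt2 (𝕜 : Type*) [Field 𝕜]
    (Hp Hm : Type*) [AddCommGroup Hp] [Module 𝕜 Hp] [AddCommGroup Hm] [Module 𝕜 Hm]
    (Pp Lp' : Submodule 𝕜 Hp) (Pm Lm' : Submodule 𝕜 Hm)
    (hplus : IsCompl Pp Lp') (hminus : IsCompl Pm Lm')
    (D : Hp →ₗ[𝕜] Hm)
    (A : Pp →ₗ[𝕜] Pm) (B : Lp' →ₗ[𝕜] Pm) (C : Pp →ₗ[𝕜] Lm')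
    (hA : A = (Pm.linearProjOfIsCompl Lm' hminus) ∘ₗ D ∘ₗ Pp.subtype)
    (hB : B = (Pm.linearProjOfIsCompl Lm' hminus) ∘ₗ D ∘ₗ Lp'.subtype)
    (hC : C = (Lm'.linearProjOfIsCompl Pm hminus.symm) ∘ₗ D ∘ₗ Pp.subtype)
    (hAbij : Function.Bijective A)
    (e : Pp ≃ₗ[𝕜] Pm) (he : (e : Pp →ₗ[𝕜] Pm) = A)
    (Kp : Submodule 𝕜 Hp) (hKp : Kp = Pp)
    (Lp : Submodule 𝕜 Hp)
    (hLp : Lp = LinearMap.range (Lp'.subtype - Pp.subtype ∘ₗ e.symm.toLinearMap ∘ₗ B))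
    (Km : Submodule 𝕜 Hm)
    (hKm : Km = LinearMap.range (Pm.subtype + Lm'.subtype ∘ₗ C ∘ₗ e.symm.toLinearMap))
    (Lm : Submodule 𝕜 Hm) (hLm : Lm = Lm') :
    IsCompl Kp Lp ∧ IsCompl Km Lm ∧
    Set.MapsTo D (Kp : Set Hp) (Km : Set Hm) ∧
    Set.MapsTo D (Lp : Set Hp) (Lm : Set Hm) ∧
    Set.BijOn D (Kp : Set Hp) (Km : Set Hm) :=
  stmt2_general 𝕜 Hp Hm Pp Lp' Pm Lm' hplus hminus D A B C hA hB hC e he Kp hKp Lp hLp Km hKm Lm hLm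
end
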